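/- For every a ∈ ℝ, M(a) > |a|, i.e., the function M strictly upper-bounds the absolute value function everywhere. -/

import Mathlib

open MeasureTheory Real

open Set Filter

/-- The error function `erf x = (2/sqrt pi) * integral_0^x exp(-t^2) dt`. -/
noncomputable def erf (x : ℝ) : ℝ :=
  (2 / Real.sqrt Real.pi) * ∫ t in (0:ℝ)..x, Real.exp (-t ^ 2)

/-- `M a = sqrt (2/pi) * exp (-a^2/2) + a * erf (a/sqrt 2)`. -/
noncomputable def Mfun (a : ℝ) : ℝ :=
  Real.sqrt (2 / Real.pi) * Real.exp (-a ^ 2 / 2) + a * erf (a / Real.sqrt 2)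

-- tail integral of t exp(-t^2)
lemma tail_mul (x : ℝ) : ∫ t in Ioi x, t * Real.exp (-t ^ 2) = Real.exp (-x ^ 2) / 2 := by
  have h := integral_Ioi_of_hasDerivAt_of_tendsto'
    (f := fun t => -Real.exp (-t ^ 2) / 2) (f' := fun t => t * Real.exp (-t ^ 2)) (a := x)
    (m := 0) ?_ ?_ ?_
  · rw [h]; ring
  · intro t _
    have h1 : HasDerivAt (fun t : ℝ => -t ^ 2) (-(2 * t)) t := by
      simpa using ((hasDerivAt_pow 2 t).fun_neg)
    have h2 := (h1.exp).fun_neg.div_const 2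
    exact h2.congr_deriv (by ring)
  · have : Integrable fun t : ℝ => t * Real.exp (-t ^ 2) := by
      have := integrable_mul_exp_neg_mul_sq (b := 1) one_pos
      simpa using this
    exact this.integrableOn
  · have h1 : Tendsto (fun t : ℝ => -t ^ 2) atTop atBot := by
      apply tendsto_neg_atBot_iff.mpr
      exact tendsto_pow_atTop (by norm_num)
    have h2 := (Real.tendsto_exp_atBot.comp h1).neg.div_const 2
    simpa using h2

lemma split (x : ℝ) (hx : 0 ≤ x) :
    (∫ t in (0:ℝ)..x, Real.exp (-t ^ 2)) = Real.sqrt Real.pi / 2 - ∫ t in Ioi x, Real.exp (-t ^ 2) := by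
  have hint : Integrable fun t : ℝ => Real.exp (-t ^ 2) := by
    simpa using integrable_exp_neg_mul_sq (b := 1) one_pos
  have hU : Ioc 0 x ∪ Ioi x = Ioi (0:ℝ) := Ioc_union_Ioi_eq_Ioi hx
  have hdisj : Disjoint (Ioc (0:ℝ) x) (Ioi x) := Ioc_disjoint_Ioi le_rfl
  have hsum : (∫ t in Ioc (0:ℝ) x, Real.exp (-t ^ 2)) + ∫ t in Ioi x, Real.exp (-t ^ 2)
      = ∫ t in Ioi (0:ℝ), Real.exp (-t ^ 2) := by
    rw [← hU]
    exact (setIntegral_union hdisj measurableSet_Ioi hint.integrableOn hint.integrableOn).symm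
  have hG : (∫ t in Ioi (0:ℝ), Real.exp (-t ^ 2)) = Real.sqrt Real.pi / 2 := by
    have := integral_gaussian_Ioi 1
    simpa using this
  rw [intervalIntegral.integral_of_le hx]
  linarith [hsum, hG]

lemma tail_lt (x : ℝ) (hx : 0 < x) :
    (∫ t in Ioi x, Real.exp (-t ^ 2)) < Real.exp (-x ^ 2) / (2 * x) := by
  have hint : Integrable fun t : ℝ => Real.exp (-t ^ 2) := by
    simpa using integrable_exp_neg_mul_sq (b := 1) one_pos
  have hintm : Integrable fun t : ℝ => t * Real.exp (-t ^ 2) := by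
    simpa using integrable_mul_exp_neg_mul_sq (b := 1) one_pos
  have hdiff : Integrable (fun t : ℝ => (t / x - 1) * Real.exp (-t ^ 2)) := by
    have : (fun t : ℝ => (t / x - 1) * Real.exp (-t ^ 2))
        = fun t => (1 / x) * (t * Real.exp (-t ^ 2)) - Real.exp (-t ^ 2) := by
      funext t; field_simp
    rw [this]
    exact (hintm.const_mul _).sub hint
  have hpos : 0 < ∫ t in Ioi x, (t / x - 1) * Real.exp (-t ^ 2) := by
    rw [setIntegral_pos_iff_support_of_nonneg_ae]
    · have hsub : Ioi x ⊆ (Function.support fun t => (t / x - 1) * Real.exp (-t ^ 2)) := by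
        intro t ht
        have h1 : (1:ℝ) < t / x := (one_lt_div hx).mpr ht
        exact mul_ne_zero (by linarith) (Real.exp_ne_zero _)
      rw [inter_eq_right.mpr hsub, Real.volume_Ioi]
      simp
    · filter_upwards [ae_restrict_mem measurableSet_Ioi] with t ht
      have h1 : (1:ℝ) ≤ t / x := (one_le_div hx).mpr ht.le
      have := Real.exp_pos (-t ^ 2)
      exact mul_nonneg (by linarith) this.le
    · exact hdiff.integrableOn
  have heq : (∫ t in Ioi x, (t / x - 1) * Real.exp (-t ^ 2))
      = (1/x) * (Real.exp (-x ^ 2) / 2) - ∫ t in Ioi x, Real.exp (-t ^ 2) := by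
    have : (∫ t in Ioi x, (t / x - 1) * Real.exp (-t ^ 2))
        = (∫ t in Ioi x, (1 / x) * (t * Real.exp (-t ^ 2))) - ∫ t in Ioi x, Real.exp (-t ^ 2) := by
      rw [← integral_sub ((hintm.const_mul _).integrableOn) hint.integrableOn]
      congr 1; funext t; field_simp
    rw [this, integral_const_mul, tail_mul]
  rw [heq] at hpos
  have : (1:ℝ)/x * (Real.exp (-x^2)/2) = Real.exp (-x^2)/(2*x) := by field_simp
  linarith [hpos, this.symm ▸ hpos]

lemma erf_neg (x : ℝ) : erf (-x) = - erf x := by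
  have hkey : (∫ t in (0:ℝ)..(-x), Real.exp (-t ^ 2)) = - ∫ t in (0:ℝ)..x, Real.exp (-t ^ 2) := by
    have h := intervalIntegral.integral_comp_neg (a := (0:ℝ)) (b := x)
      (fun t => Real.exp (-t ^ 2))
    simp only [neg_sq, neg_zero] at h
    rw [intervalIntegral.integral_symm, ← h]
  unfold erf
  rw [hkey]
  ring

lemma key (a : ℝ) (ha : 0 < a) : a < Mfun a := by
  have h2 : (0:ℝ) < Real.sqrt 2 := by positivity
  have hπ : (0:ℝ) < Real.sqrt Real.pi := Real.sqrt_pos.mpr Real.pi_pos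
  set x := a / Real.sqrt 2 with hxdef
  have hx : 0 < x := div_pos ha h2
  have hxsq : x ^ 2 = a ^ 2 / 2 := by
    rw [hxdef, div_pow, Real.sq_sqrt (by norm_num : (0:ℝ) ≤ 2)]
  have hTbound : (∫ t in Ioi x, Real.exp (-t ^ 2))
      < Real.sqrt 2 * Real.exp (-a ^ 2 / 2) / (2 * a) := by
    have h := tail_lt x hx
    have hex : Real.exp (-x ^ 2) = Real.exp (-a ^ 2 / 2) := by rw [hxsq]; ring_nf
    have h2x : 2 * x = 2 * a / Real.sqrt 2 := by rw [hxdef]; ring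
    have heq : Real.exp (-x ^ 2) / (2 * x) = Real.sqrt 2 * Real.exp (-a ^ 2 / 2) / (2 * a) := by
      rw [hex, h2x, div_div_eq_mul_div]
      ring
    rwa [heq] at h
  unfold Mfun erf
  rw [← hxdef, split x hx.le]
  set T := ∫ t in Ioi x, Real.exp (-t ^ 2) with hT
  have hsqrt2pi : Real.sqrt (2 / Real.pi) = Real.sqrt 2 / Real.sqrt Real.pi :=
    Real.sqrt_div (by norm_num) _
  have hexpand : a * (2 / Real.sqrt Real.pi * (Real.sqrt Real.pi / 2 - T))
      = a - 2 * a / Real.sqrt Real.pi * T := by field_simp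
  have h1 : 2 * a / Real.sqrt Real.pi * T
      < 2 * a / Real.sqrt Real.pi * (Real.sqrt 2 * Real.exp (-a ^ 2 / 2) / (2 * a)) :=
    mul_lt_mul_of_pos_left hTbound (by positivity)
  have h2' : 2 * a / Real.sqrt Real.pi * (Real.sqrt 2 * Real.exp (-a ^ 2 / 2) / (2 * a))
      = Real.sqrt (2 / Real.pi) * Real.exp (-a ^ 2 / 2) := by
    rw [hsqrt2pi]; field_simp
  rw [hexpand]
  linarith [h2' ▸ h1]


/-- `M` strictly upper-bounds the absolute value function everywhere. -/
theorem abs_lt_Mfun (a : ℝ) : |a| < Mfun a := by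
  have hMeven : ∀ b : ℝ, Mfun (-b) = Mfun b := by
    intro b
    unfold Mfun
    rw [show (-b)/Real.sqrt 2 = -(b/Real.sqrt 2) by ring, erf_neg]
    ring_nf
  rcases lt_trichotomy a 0 with h | h | h
  · rw [abs_of_neg h, ← hMeven a]
    exact key (-a) (by linarith)
  · subst h
    simp only [abs_zero]
    unfold Mfun erf
    simp only [zero_div, intervalIntegral.integral_same, mul_zero, zero_mul, add_zero]
    positivity
  · rw [abs_of_pos h]; exact key a h
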